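/- arXiv:math/0206019 — 2 statements merged into one kernel-verified Lean document; each statement's English description precedes it below -/
import Mathlib

section
/- Let 𝔱 be a compact Cartan subalgebra of 𝔰𝔩(2,ℝ) (i.e. a Cartan subalgebra on which the Killing form is negative definite, e.g. the span of the rotation generator), and let 𝔟 ⊂ 𝔰𝔩(2,ℂ) be any Borel subalgebra (2-dimensional solvable subalgebra) containing 𝔱. Then 𝔰𝔩(2,ℝ) + 𝔟 = 𝔰𝔩(2,ℂ) as real vector spaces. -/
open Matrix

attribute [local instance 100] LieRing.ofAssociativeRing

/-!
Pick `x ≠ 0` in `𝔱`. Being traceless, `x` satisfies `x² = c • 1` with `c = tr(x²)/2`, and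
`c < 0` by compactness. The plane `𝔟 ∋ x` is `ad x`-stable and the centraliser of `x` in
`𝔰𝔩(2)` is `ℂ x`, so `𝔟` contains an `ad x`-eigenvector `e` with eigenvalue `ν ≠ 0`; then
`x e = -e x`, whence `ν² = 4c < 0`. So `ν` is imaginary and, `x` being real, `ē` is an
eigenvector with eigenvalue `-ν`. The eigenvectors `x, e, ē` span `𝔰𝔩(2,ℂ)`, and
`αx + βe + γē = (γ̄e + γē) + (αx + (β - γ̄)e)` is a real matrix plus an element of `𝔟`.
-/

namespace Matrix

section TwoByTwo

variable {R : Type*} [CommRing R] {x y : Matrix (Fin 2) (Fin 2) R}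

theorem mul_add_mul_eq_trace_mul_smul_one (hx : x.trace = 0) (hy : y.trace = 0) :
    x * y + y * x = (x * y).trace • 1 := by
  have hx₁₁ : x 1 1 = -x 0 0 := by rw [trace_fin_two] at hx; linear_combination hx
  have hy₁₁ : y 1 1 = -y 0 0 := by rw [trace_fin_two] at hy; linear_combination hy
  ext i j
  fin_cases i <;> fin_cases j <;> simp [mul_apply, trace_fin_two, hx₁₁, hy₁₁] <;> ring

theorem trace_mul_self_smul_eq_of_commute (hx : x.trace = 0) (hy : y.trace = 0)
    (hxy : Commute x y) : (x * x).trace • y = (x * y).trace • x :=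
  calc (x * x).trace • y = (x * x + x * x) * y := by
        rw [mul_add_mul_eq_trace_mul_smul_one hx hx, smul_mul_assoc, one_mul]
    _ = x * (x * y + y * x) := by rw [← hxy.eq, add_mul, mul_add, mul_assoc]
    _ = (x * y).trace • x := by
        rw [mul_add_mul_eq_trace_mul_smul_one hx hy, mul_smul_comm, mul_one]

end TwoByTwo

theorem mul_self_eq_trace_div_two_smul_one {K : Type*} [Field K] [NeZero (2 : K)]
    {x : Matrix (Fin 2) (Fin 2) K} (hx : x.trace = 0) : x * x = ((x * x).trace / 2) • 1 := by
  rw [div_eq_inv_mul, mul_smul, ← mul_add_mul_eq_trace_mul_smul_one hx hx, ← two_smul K,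
    smul_smul, inv_mul_cancel₀ two_ne_zero, one_smul]

theorem trace_mul_lie_eq_zero {n R : Type*} [Fintype n] [DecidableEq n] [CommRing R]
    (x y : Matrix n n R) : (x * ⁅x, y⁆).trace = 0 := by
  rw [Ring.lie_def, mul_sub, trace_sub, ← mul_assoc, ← mul_assoc, trace_mul_cycle x y x,
    sub_self]

theorem finrank_ker_traceLinearMap {n K : Type*} [Fintype n] [Nonempty n] [Field K] :
    Module.finrank K (LinearMap.ker (traceLinearMap n K K)) =
      Fintype.card n * Fintype.card n - 1 := by
  have h := LinearMap.finrank_range_add_finrank_ker (traceLinearMap n K K)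
  rw [LinearMap.range_eq_top.mpr trace_surjective, finrank_top, Module.finrank_self,
    Module.finrank_matrix, Module.finrank_self, mul_one] at h
  omega

theorem mem_span_singleton_of_lie_eq_smul {K : Type*} [Field K]
    {x v : Matrix (Fin 2) (Fin 2) K} (hx : x.trace = 0) (hv : v.trace = 0)
    (hxx : (x * x).trace ≠ 0) {α : K} (hxv : ⁅x, v⁆ = α • x) : v ∈ K ∙ x := by
  have hα : α = 0 := by
    have h := trace_mul_lie_eq_zero x v
    rw [hxv, mul_smul_comm, trace_smul, smul_eq_mul] at h
    exact (mul_eq_zero.mp h).resolve_right hxx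
  have hcomm : Commute x v := sub_eq_zero.mp (by rw [← Ring.lie_def, hxv, hα, zero_smul])
  refine Submodule.mem_span_singleton.mpr ⟨(x * v).trace / (x * x).trace, ?_⟩
  rw [div_eq_inv_mul, mul_smul, ← trace_mul_self_smul_eq_of_commute hx hv hcomm, smul_smul,
    inv_mul_cancel₀ hxx, one_smul]

end Matrix

theorem Submodule.exists_eq_span_pair_of_finrank_eq_two {K V : Type*} [Field K]
    [AddCommGroup V] [Module K V] {W : Submodule K V} (hW : Module.finrank K W = 2) {x : V}
    (hx : x ∈ W) (hx₀ : x ≠ 0) : ∃ v ∈ W, v ∉ K ∙ x ∧ W = span K {x, v} := by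
  have hlt : K ∙ x < W := by
    refine lt_of_le_of_ne ((span_singleton_le_iff_mem x W).mpr hx) fun h ↦ ?_
    have := finrank_span_singleton (K := K) hx₀
    rw [h, hW] at this
    exact absurd this (by norm_num)
  obtain ⟨v, hv, hvx⟩ := SetLike.exists_of_lt hlt
  have hli : LinearIndependent K ![x, v] := (LinearIndependent.pair_iff' hx₀).mpr fun a h ↦
    hvx (mem_span_singleton.mpr ⟨a, h⟩)
  have : FiniteDimensional K W := Module.finite_of_finrank_pos (by omega)
  refine ⟨v, hv, hvx, (eq_of_le_of_finrank_le ?_ ?_).symm⟩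
  · exact span_le.mpr (Set.insert_subset hx (Set.singleton_subset_iff.mpr hv))
  · rw [hW, ← Matrix.range_cons_cons_empty x v ![], finrank_span_eq_card hli, Fintype.card_fin]

section SquareScalar

variable {K A : Type*} [Field K] [Ring A] [Algebra K A] {x e : A} {c ν : K}

theorem mul_eq_neg_mul_of_lie_eq_smul (hxx : x * x = c • 1) (he : ⁅x, e⁆ = ν • e)
    (hν : ν ≠ 0) : x * e = -(e * x) := by
  have h : ν • (x * e + e * x) = 0 :=
    calc ν • (x * e + e * x) = x * ⁅x, e⁆ + ⁅x, e⁆ * x := by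
          rw [he, mul_smul_comm, smul_mul_assoc, smul_add]
      _ = x * x * e - e * (x * x) := by rw [Ring.lie_def]; noncomm_ring
      _ = 0 := by rw [hxx, smul_mul_assoc, one_mul, mul_smul_comm, mul_one, sub_self]
  exact eq_neg_of_add_eq_zero_left ((smul_eq_zero.mp h).resolve_left hν)

theorem mul_self_eq_four_mul_of_lie_eq_smul (hxx : x * x = c • 1) (he : ⁅x, e⁆ = ν • e)
    (hν : ν ≠ 0) (he₀ : e ≠ 0) : ν * ν = 4 * c := by
  have hxe := mul_eq_neg_mul_of_lie_eq_smul hxx he hν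
  have h : (ν * ν - 4 * c) • e = 0 :=
    calc (ν * ν - 4 * c) • e = x * ⁅x, e⁆ - ⁅x, e⁆ * x - (4 * c) • e := by
          rw [he, mul_smul_comm, smul_mul_assoc, ← smul_sub, ← Ring.lie_def, he, smul_smul,
            sub_smul]
      _ = x * x * e + e * (x * x) - 2 • (x * e * x) - (4 * c) • e := by
          rw [Ring.lie_def]; noncomm_ring
      _ = 0 := by
        rw [hxe, neg_mul, mul_assoc e x x, hxx, smul_mul_assoc, one_mul, mul_smul_comm, mul_one]
        module
  exact sub_eq_zero.mp ((smul_eq_zero.mp h).resolve_right he₀)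

end SquareScalar

namespace Matrix

variable {K : Type*} [Field K]

theorem exists_lie_eigenvector_of_finrank_eq_two {𝔟 : Submodule K (Matrix (Fin 2) (Fin 2) K)}
    (h𝔟 : Module.finrank K 𝔟 = 2) (htr : ∀ b ∈ 𝔟, b.trace = 0)
    {x : Matrix (Fin 2) (Fin 2) K} (hx : x ∈ 𝔟) (hxx : (x * x).trace ≠ 0)
    (hlie : ∀ b ∈ 𝔟, ⁅x, b⁆ ∈ 𝔟) : ∃ e ∈ 𝔟, e ≠ 0 ∧ ∃ ν : K, ν ≠ 0 ∧ ⁅x, e⁆ = ν • e := by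
  have hx₀ : x ≠ 0 := by rintro rfl; simp at hxx
  obtain ⟨v, hv, hvx, h𝔟v⟩ := Submodule.exists_eq_span_pair_of_finrank_eq_two h𝔟 hx hx₀
  obtain ⟨α, β, hxv⟩ := Submodule.mem_span_pair.mp (h𝔟v ▸ hlie v hv)
  have hβ : β ≠ 0 := by
    rintro rfl
    rw [zero_smul, add_zero] at hxv
    exact hvx (mem_span_singleton_of_lie_eq_smul (htr x hx) (htr v hv) hxx hxv.symm)
  refine ⟨v + (α / β) • x, add_mem hv (Submodule.smul_mem _ _ hx), fun h ↦ hvx ?_, β, hβ, ?_⟩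
  · exact Submodule.mem_span_singleton.mpr
      ⟨-(α / β), by rw [neg_smul, ← eq_neg_iff_add_eq_zero.mpr h]⟩
  · rw [lie_add, lie_smul, lie_self, smul_zero, add_zero, ← hxv, smul_add, smul_smul,
      mul_div_cancel₀ _ hβ, add_comm]

theorem span_triple_eq_ker_trace_of_lie_eigenvectors [NeZero (2 : K)]
    {x e f : Matrix (Fin 2) (Fin 2) K} (hx : x.trace = 0) (he : e.trace = 0) (hf : f.trace = 0)
    (hx₀ : x ≠ 0) (he₀ : e ≠ 0) (hf₀ : f ≠ 0) {ν : K} (hν : ν ≠ 0) (hxe : ⁅x, e⁆ = ν • e)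
    (hxf : ⁅x, f⁆ = -ν • f) :
    Submodule.span K {x, e, f} = LinearMap.ker (traceLinearMap (Fin 2) K K) := by
  have hli : LinearIndependent K ![x, e, f] := by
    refine Module.End.eigenvectors_linearIndependent' (LieAlgebra.ad K _ x) ![0, ν, -ν] ?_ _ ?_
    · have hν' : ν ≠ -ν := fun h ↦
        hν ((mul_eq_zero.mp (by linear_combination h : (2 : K) * ν = 0)).resolve_left
          two_ne_zero)
      intro i j h
      fin_cases i <;> fin_cases j <;> simp [hν, hν', hν.symm, hν'.symm] at h ⊢
    · intro i
      fin_cases i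
      · exact ⟨by simp, hx₀⟩
      · exact ⟨by simpa [Module.End.mem_eigenspace_iff] using hxe, he₀⟩
      · exact ⟨by simpa [Module.End.mem_eigenspace_iff] using hxf, hf₀⟩
  refine Submodule.eq_of_le_of_finrank_eq ?_ ?_
  · simp [Submodule.span_le, Set.insert_subset_iff, hx, he, hf]
  · rw [finrank_ker_traceLinearMap, ← Matrix.range_cons_cons_empty e f ![], Set.insert_eq,
      ← range_cons, finrank_span_eq_card hli]
    simp

end Matrix

open ComplexConjugate

theorem Complex.conj_eq_neg_of_mul_self {z : ℂ} (him : (z * z).im = 0) (hre : (z * z).re < 0) :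
    conj z = -z := by
  simp only [Complex.mul_im, Complex.mul_re] at him hre
  have hz : z.re = 0 := by
    rcases mul_eq_zero.mp (by linarith : z.re * z.im = 0) with h | h
    · exact h
    · rw [h] at hre; nlinarith
  exact Complex.ext (by simp [hz]) (by simp)

namespace Matrix

theorem map_conj_eq_self {m n : Type*} {x : Matrix m n ℂ} (hx : ∀ i j, (x i j).im = 0) :
    x.map conj = x := by
  ext i j
  exact Complex.conj_eq_iff_im.mpr (hx i j)

theorem trace_map_conj {n : Type*} [Fintype n] (w : Matrix n n ℂ) :
    (w.map conj).trace = conj w.trace :=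
  (AddMonoidHom.map_trace (starRingEnd ℂ) w).symm

theorem exists_real_add_of_eq_add_smul_map_conj {n : Type*} [Fintype n] {m b e : Matrix n n ℂ}
    (he : e.trace = 0) {γ : ℂ} (hm : m = b + γ • e.map conj) :
    ∃ a : Matrix n n ℂ, (a.trace = 0 ∧ ∀ i j, (a i j).im = 0) ∧ m = a + (b - conj γ • e) := by
  have hconj : (conj γ • e).map conj = γ • e.map conj := by ext i j; simp
  refine ⟨conj γ • e + (conj γ • e).map conj, ⟨?_, fun i j ↦ ?_⟩, ?_⟩
  · simp [trace_map_conj, he]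
  · simp only [add_apply, map_apply, Complex.add_conj]
    simp
  · rw [hm, hconj]
    abel

section LieConj

variable {n : Type*} [Fintype n] [DecidableEq n] {x e : Matrix n n ℂ}

theorem lie_map_conj (hx : ∀ i j, (x i j).im = 0) : ⁅x, e.map conj⁆ = ⁅x, e⁆.map conj := by
  conv_lhs => rw [← map_conj_eq_self hx]
  rw [Ring.lie_def, Ring.lie_def, Matrix.map_sub _ (map_sub _), Matrix.map_mul, Matrix.map_mul]

theorem lie_map_conj_eq_neg_smul (hx : ∀ i j, (x i j).im = 0) {ν : ℂ} (hxe : ⁅x, e⁆ = ν • e)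
    (hν : conj ν = -ν) : ⁅x, e.map conj⁆ = -ν • e.map conj := by
  rw [lie_map_conj hx, hxe, ← hν]
  ext i j
  simp

end LieConj

theorem conj_eq_neg_of_lie_eq_smul {x e : Matrix (Fin 2) (Fin 2) ℂ} (hx : x.trace = 0)
    (hxreal : ∀ i j, (x i j).im = 0) (hxx : (x * x).trace.re < 0) {ν : ℂ} (hxe : ⁅x, e⁆ = ν • e)
    (hν : ν ≠ 0) (he₀ : e ≠ 0) : conj ν = -ν := by
  have hνν : ν * ν = 2 * (x * x).trace := by
    rw [mul_self_eq_four_mul_of_lie_eq_smul (mul_self_eq_trace_div_two_smul_one hx) hxe hν he₀]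
    ring
  have hxx_im : (x * x).trace.im = 0 := by
    simp [trace_fin_two, mul_apply, Complex.mul_im, hxreal]
  exact Complex.conj_eq_neg_of_mul_self (by simp [hνν, hxx_im])
    (by simp [hνν, hxx_im]; linarith)

end Matrix

theorem sl2R_add_borel_eq_sl2C_general
    (𝔱 : Submodule ℝ (Matrix (Fin 2) (Fin 2) ℂ))
    (h𝔱sl2R : ∀ x ∈ 𝔱, Matrix.trace x = 0 ∧ ∀ i j, (x i j).im = 0)
    (h𝔱cartan : Module.finrank ℝ 𝔱 = 1)
    (h𝔱compact : ∀ x ∈ 𝔱, x ≠ 0 → (Matrix.trace (x * x)).re < 0)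
    (𝔟 : LieSubalgebra ℂ (Matrix (Fin 2) (Fin 2) ℂ))
    (h𝔟dim : Module.finrank ℂ 𝔟 = 2)
    (h𝔟sl2C : ∀ b ∈ 𝔟, Matrix.trace b = 0)
    (h𝔱𝔟 : ∀ x ∈ 𝔱, x ∈ 𝔟) :
    ∀ m : Matrix (Fin 2) (Fin 2) ℂ, Matrix.trace m = 0 →
      ∃ a b : Matrix (Fin 2) (Fin 2) ℂ,
        (Matrix.trace a = 0 ∧ ∀ i j, (a i j).im = 0) ∧ b ∈ 𝔟 ∧ m = a + b := by
  intro m hm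
  obtain ⟨x, hx𝔱, hx₀⟩ := Submodule.exists_mem_ne_zero_of_ne_bot (p := 𝔱) (by
    rintro rfl; simp at h𝔱cartan)
  obtain ⟨hxtr, hxreal⟩ := h𝔱sl2R x hx𝔱
  have hx𝔟 := h𝔱𝔟 x hx𝔱
  have hxx := h𝔱compact x hx𝔱 hx₀
  obtain ⟨e, he𝔟, he₀, ν, hν, hxe⟩ := exists_lie_eigenvector_of_finrank_eq_two
    (𝔟 := 𝔟.toSubmodule) h𝔟dim h𝔟sl2C hx𝔟 (fun h ↦ by simp [h] at hxx)
    (fun b hb ↦ 𝔟.lie_mem hx𝔟 hb)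
  have he : e.trace = 0 := h𝔟sl2C e he𝔟
  have hν_conj := conj_eq_neg_of_lie_eq_smul hxtr hxreal hxx hxe hν he₀
  have hspan := span_triple_eq_ker_trace_of_lie_eigenvectors hxtr he
    (by rw [trace_map_conj, he, map_zero]) hx₀ he₀ (by simpa [← Matrix.ext_iff] using he₀) hν
    hxe (lie_map_conj_eq_neg_smul hxreal hxe hν_conj)
  obtain ⟨α, β, γ, hm'⟩ := Submodule.mem_span_triple.mp (hspan.ge hm)
  obtain ⟨a, ha, hma⟩ := exists_real_add_of_eq_add_smul_map_conj he hm'.symm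
  exact ⟨a, _, ha, 𝔟.sub_mem (𝔟.add_mem (𝔟.smul_mem _ hx𝔟) (𝔟.smul_mem _ he𝔟))
    (𝔟.smul_mem _ he𝔟), hma⟩

/-- Let `𝔱` be a compact Cartan subalgebra of `𝔰𝔩(2,ℝ)` (a
1-dimensional subalgebra on which the Killing form `κ(x,y) = 4 tr(xy)` is negative
definite), and let `𝔟 ⊂ 𝔰𝔩(2,ℂ)` be a Borel subalgebra (2-dimensional solvable
complex subalgebra) containing `𝔱`.  Then `𝔰𝔩(2,ℝ) + 𝔟 = 𝔰𝔩(2,ℂ)`: every traceless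
complex matrix is the sum of a traceless real matrix and an element of `𝔟`. -/
theorem sl2R_add_borel_eq_sl2C
    (𝔱 : Submodule ℝ (Matrix (Fin 2) (Fin 2) ℂ))
    (h𝔱sl2R : ∀ x ∈ 𝔱, Matrix.trace x = 0 ∧ ∀ i j, (x i j).im = 0)
    (h𝔱cartan : Module.finrank ℝ 𝔱 = 1)
    (h𝔱compact : ∀ x ∈ 𝔱, x ≠ 0 → (Matrix.trace (x * x)).re < 0)
    (𝔟 : LieSubalgebra ℂ (Matrix (Fin 2) (Fin 2) ℂ))
    (h𝔟solv : LieAlgebra.IsSolvable 𝔟)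
    (h𝔟dim : Module.finrank ℂ 𝔟 = 2)
    (h𝔟sl2C : ∀ b ∈ 𝔟, Matrix.trace b = 0)
    (h𝔱𝔟 : ∀ x ∈ 𝔱, x ∈ 𝔟) :
    ∀ m : Matrix (Fin 2) (Fin 2) ℂ, Matrix.trace m = 0 →
      ∃ a b : Matrix (Fin 2) (Fin 2) ℂ,
        (Matrix.trace a = 0 ∧ ∀ i j, (a i j).im = 0) ∧ b ∈ 𝔟 ∧ m = a + b :=
  sl2R_add_borel_eq_sl2C_general 𝔱 h𝔱sl2R h𝔱cartan h𝔱compact 𝔟 h𝔟dim h𝔟sl2C h𝔱𝔟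
end

section
/- Let K ⊂ ℝᵐ × ℝᵈ be a set of points (s, ζ) such that ζ = ζ̃ − s·v where ζ̃ ranges over a closed set A ⊂ ℝᵈ, v ∈ ℝᵈ is a fixed unit vector, s ≥ 0, and the angle between every ζ̃ ∈ A \ {0} and v is at least α ∈ (0, π/2). If moreover ‖ζ‖ ≤ R, then s ≤ R/sin(α). -/
open InnerProductGeometry Real RealInnerProductSpace

/-
Expanding the square, `‖x - s • v‖² = ‖x‖² - 2 s ⟪x, v⟫ + s² ‖v‖²`, and the angle condition bounds
`⟪x, v⟫` by `‖x‖ ‖v‖ cos α`; completing the square in `‖x‖` leaves `(s ‖v‖ sin α)²` as a lower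
bound. The point `ζ̃ = 0` is harmless since Mathlib sets `angle 0 v = π / 2 > α`.
-/

section

variable {E : Type*} [NormedAddCommGroup E] [InnerProductSpace ℝ E]

theorem inner_le_norm_mul_norm_mul_cos_of_le_angle {x v : E} {α : ℝ} (hα : 0 ≤ α)
    (h : α ≤ angle x v) : ⟪x, v⟫ ≤ ‖x‖ * ‖v‖ * cos α := by
  rw [← cos_angle_mul_norm_mul_norm, mul_comm]
  gcongr
  exact cos_le_cos_of_nonneg_of_le_pi hα (angle_le_pi x v) h

theorem mul_norm_mul_sin_le_norm_sub_smul {x v : E} {α s : ℝ} (hs : 0 ≤ s)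
    (h : ⟪x, v⟫ ≤ ‖x‖ * ‖v‖ * cos α) : s * ‖v‖ * sin α ≤ ‖x - s • v‖ := by
  have hsq : (s * ‖v‖ * sin α) ^ 2 ≤ ‖x - s • v‖ ^ 2 :=
    calc (s * ‖v‖ * sin α) ^ 2
        ≤ (‖x‖ - s * ‖v‖ * cos α) ^ 2 + (s * ‖v‖ * sin α) ^ 2 := by nlinarith
      _ = ‖x‖ ^ 2 - 2 * s * (‖x‖ * ‖v‖ * cos α) + s ^ 2 * ‖v‖ ^ 2 := by
          linear_combination (s * ‖v‖) ^ 2 * sin_sq_add_cos_sq α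
      _ ≤ ‖x‖ ^ 2 - 2 * s * ⟪x, v⟫ + s ^ 2 * ‖v‖ ^ 2 := by gcongr
      _ = ‖x - s • v‖ ^ 2 := by
          rw [norm_sub_sq_real, inner_smul_right, norm_smul, norm_eq_abs, abs_of_nonneg hs]
          ring
  exact (abs_le_of_sq_le_sq' hsq (norm_nonneg _)).2

end

theorem parameter_bound_from_angle_general {d : ℕ} (A : Set (EuclideanSpace ℝ (Fin d)))
    (v : EuclideanSpace ℝ (Fin d)) (hv : ‖v‖ = 1)
    (α : ℝ) (hα0 : 0 < α) (hα1 : α < π / 2)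
    (hangle : ∀ ζ' ∈ A, ζ' ≠ 0 → α ≤ InnerProductGeometry.angle ζ' v)
    (s : ℝ) (hs : 0 ≤ s) (ζ' : EuclideanSpace ℝ (Fin d)) (hζ'A : ζ' ∈ A)
    (ζ : EuclideanSpace ℝ (Fin d)) (hζ : ζ = ζ' - s • v)
    (R : ℝ) (hR : ‖ζ‖ ≤ R) :
    s ≤ R / Real.sin α := by
  have hα_le_angle : α ≤ angle ζ' v := by
    rcases eq_or_ne ζ' 0 with rfl | hζ'0
    · rw [angle_zero_left]; exact hα1.le
    · exact hangle ζ' hζ'A hζ'0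
  have hsin : 0 < sin α := sin_pos_of_pos_of_lt_pi hα0 (by linarith [pi_pos])
  have key := mul_norm_mul_sin_le_norm_sub_smul hs
    (inner_le_norm_mul_norm_mul_cos_of_le_angle hα0.le hα_le_angle)
  rw [hv, mul_one, ← hζ] at key
  rw [le_div_iff₀ hsin]
  linarith

/-- if `ζ = ζ̃ − s•v` with `ζ̃` in a closed set `A`, `v` a unit vector,
`s ≥ 0`, every nonzero `ζ̃ ∈ A` making angle at least `α ∈ (0, π/2)` with `v`, and
`‖ζ‖ ≤ R`, then `s ≤ R / sin α`. -/
theorem parameter_bound_from_angle {d : ℕ} (A : Set (EuclideanSpace ℝ (Fin d)))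
    (hA : IsClosed A) (v : EuclideanSpace ℝ (Fin d)) (hv : ‖v‖ = 1)
    (α : ℝ) (hα0 : 0 < α) (hα1 : α < π / 2)
    (hangle : ∀ ζ' ∈ A, ζ' ≠ 0 → α ≤ InnerProductGeometry.angle ζ' v)
    (s : ℝ) (hs : 0 ≤ s) (ζ' : EuclideanSpace ℝ (Fin d)) (hζ'A : ζ' ∈ A)
    (ζ : EuclideanSpace ℝ (Fin d)) (hζ : ζ = ζ' - s • v)
    (R : ℝ) (hR : ‖ζ‖ ≤ R) :
    s ≤ R / Real.sin α :=
  parameter_bound_from_angle_general A v hv α hα0 hα1 hangle s hs ζ' hζ'A ζ hζ R hR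
end
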